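/- Let A = (Q, δ, I, F) be an NFA over α with finite state set Q, and let R₁, R₂ be relations on Q. If s₁, s₂, s₃ are least solutions to the transformation automata A[R₁], A[R₂], A[R₁ ∘ R₂] respectively, then s₁(id) * s₂(id) ⊴ s₃(id), where id is the identity relation on Q. -/

import Mathlib

/-- Homomorphic extension of `h : α → K` to regular expressions. -/
def interp {α : Type*} {K : Type*} [KleeneAlgebra K] (h : α → K) :
    RegularExpression α → K
  | .zero => 0
  | .epsilon => 1
  | .char a => h a
  | .plus e f => interp h e + interp h f
  | .comp e f => interp h e * interp h f
  | .star e => KStar.kstar (interp h e)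

universe u

/-- `e ⊴ f`: under every interpretation into any Kleene algebra, `ĥ e ≤ ĥ f`. -/
def kle {α : Type*} (e f : RegularExpression α) : Prop :=
  ∀ (K : Type u) [KleeneAlgebra K] (h : α → K), interp h e ≤ interp h f

/-- Composition of relations: `(S ∘ T) q q'' ↔ ∃ q', S q q' ∧ T q' q''`. -/
def relComp {Q : Type*} (S T : Q → Q → Prop) : Q → Q → Prop :=
  fun q q'' => ∃ q', S q q' ∧ T q' q''

/-- The relation `δ_a = {(q, q') : q' ∈ δ q a}` induced by letter `a` in the NFA `A`. -/
def deltaRel {α Q : Type*} (A : NFA α Q) (a : α) : Q → Q → Prop :=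
  fun q q' => q' ∈ A.step q a

/-- A solution to the `R`-transformation automaton `A[R]`: its states are the relations on
`Q`, the sole accepting state is `R`, and each state `S` has an `a`-transition to
`S ∘ δ_a`. -/
def RelSolution {α Q : Type*} (A : NFA α Q) (R : Q → Q → Prop)
    (s : (Q → Q → Prop) → RegularExpression α) : Prop :=
  kle.{u} 1 (s R) ∧
  ∀ (S : Q → Q → Prop) (a : α),
    kle.{u} (RegularExpression.char a * s (relComp S (deltaRel A a))) (s S)

/-- A least solution to the transformation automaton `A[R]`. -/
def LeastRelSolution {α Q : Type*} (A : NFA α Q) (R : Q → Q → Prop)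
    (s : (Q → Q → Prop) → RegularExpression α) : Prop :=
  RelSolution.{u} A R s ∧
  ∀ s' : (Q → Q → Prop) → RegularExpression α, RelSolution.{u} A R s' →
    ∀ S : Q → Q → Prop, kle.{u} (s S) (s' S)


/-!
Leastness of `s₂` against the solution `T ↦ s₃ (R₁ ∘ T)` of `A[R₂]` gives `s₂ id ⊴ s₃ R₁`, so it
suffices that `s₁ S * s₃ R₁ ⊴ s₃ S` for every relation `S`. Regular expressions have no residuals,
so `s₁` is compared with an explicit syntactic solution of `A[R₁]`: Gaussian elimination over the
finitely many relations on `Q` solves the system whose transitions use only the finitely many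
letters occurring in `s₁`. Its value at `S`, times `ĥ (s₃ R₁)`, is bounded by `ĥ (s₃ S)` because
`ĥ ∘ s₃` is closed under the transitions. A letter outside that finite set can only lead to a
state from which `R₁` is unreachable (otherwise it would occur in `s₁`), and there the syntactic
solution is set to `0`, which makes it a solution for all letters.
-/

open Computability RegularExpression

section Interpretation

variable {α : Type*} {K : Type*} [KleeneAlgebra K] (h : α → K)

instance : KStar (RegularExpression α) := ⟨RegularExpression.star⟩

@[simp] lemma interp_zero : interp h (0 : RegularExpression α) = 0 := rfl

@[simp] lemma interp_one : interp h (1 : RegularExpression α) = 1 := rfl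

@[simp] lemma interp_char (a : α) : interp h (char a) = h a := rfl

@[simp] lemma interp_add (e f : RegularExpression α) :
    interp h (e + f) = interp h e + interp h f := rfl

@[simp] lemma interp_mul (e f : RegularExpression α) :
    interp h (e * f) = interp h e * interp h f := rfl

@[simp] lemma interp_kstar (e : RegularExpression α) : interp h e∗ = (interp h e)∗ := rfl

@[simp] lemma interp_list_sum (l : List (RegularExpression α)) :
    interp h l.sum = (l.map (interp h)).sum := by
  induction l with
  | nil => rfl
  | cons e l ih => simp [ih]

end Interpretation

lemma List.sum_le_of_forall_le' {K : Type*} [IdemSemiring K] {l : List K} {c : K}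
    (hl : ∀ x ∈ l, x ≤ c) : l.sum ≤ c := by
  induction l with
  | nil => exact zero_le
  | cons x l ih =>
    rw [List.sum_cons]
    exact add_le (hl x List.mem_cons_self) (ih fun y hy => hl y (List.mem_cons_of_mem x hy))


section GaussianElimination

variable {β ι : Type*} [DecidableEq ι] [Add β] [Mul β] [Zero β] [KStar β]

def elimMatrix (m : ι → ι → β) (w : ι) : ι → ι → β :=
  fun S T => m S T + m S w * (m w w)∗ * m w T

def elimVector (m : ι → ι → β) (b : ι → β) (w : ι) : ι → β :=
  fun S => b S + m S w * (m w w)∗ * b w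

/-- Least solution of the linear system `x S ≥ b S + ∑_{T ∈ l} m S T * x T`: the unknown `w` is
eliminated by Arden's rule `x w = (m w w)∗ * (b w + ∑_{T ≠ w} m w T * x T)`. -/
def gaussSolve : List ι → (ι → ι → β) → (ι → β) → ι → β
  | [], _, b => b
  | w :: ws, m, b =>
    let x := gaussSolve ws (elimMatrix m w) (elimVector m b w)
    Function.update x w ((m w w)∗ * (b w + (ws.map fun T => m w T * x T).sum))

lemma gaussSolve_cons_self (w : ι) (ws : List ι) (m : ι → ι → β) (b : ι → β) :
    gaussSolve (w :: ws) m b w = (m w w)∗ * (b w + (ws.map fun T =>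
      m w T * gaussSolve ws (elimMatrix m w) (elimVector m b w) T).sum) :=
  Function.update_self ..

lemma gaussSolve_cons_of_ne {w S : ι} (ws : List ι) (m : ι → ι → β) (b : ι → β) (hS : S ≠ w) :
    gaussSolve (w :: ws) m b S = gaussSolve ws (elimMatrix m w) (elimVector m b w) S :=
  Function.update_of_ne hS ..

lemma interp_gaussSolve {α K : Type*} [KleeneAlgebra K] (h : α → K) (l : List ι)
    (m : ι → ι → RegularExpression α) (b : ι → RegularExpression α) (S : ι) :
    interp h (gaussSolve l m b S) =
      gaussSolve l (fun S T => interp h (m S T)) (fun S => interp h (b S)) S := by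
  induction l generalizing m b S with
  | nil => rfl
  | cons w ws ih =>
    rcases eq_or_ne S w with rfl | hS
    · simp only [gaussSolve_cons_self, interp_mul, interp_kstar, interp_add, interp_list_sum,
        List.map_map, Function.comp_def, ih]
      rfl
    · simp only [gaussSolve_cons_of_ne _ _ _ hS, ih]
      rfl

variable {K : Type*} [KleeneAlgebra K]

lemma le_gaussSolve (l : List ι) (m : ι → ι → K) (b : ι → K) (S : ι) :
    b S ≤ gaussSolve l m b S := by
  induction l generalizing m b S with
  | nil => exact le_rfl
  | cons w ws ih =>
    rcases eq_or_ne S w with rfl | hS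
    · rw [gaussSolve_cons_self]
      exact le_self_add.trans (le_mul_of_one_le_left' one_le_kstar)
    · rw [gaussSolve_cons_of_ne _ _ _ hS]
      exact (le_self_add : b S ≤ elimVector m b w S).trans
        (ih (elimMatrix m w) (elimVector m b w) S)

lemma mul_gaussSolve_le (l : List ι) (m : ι → ι → K) (b : ι → K) (S : ι) {T : ι} (hT : T ∈ l) :
    m S T * gaussSolve l m b T ≤ gaussSolve l m b S := by
  induction l generalizing m b S T with
  | nil => cases hT
  | cons w ws ih =>
    set x := gaussSolve ws (elimMatrix m w) (elimVector m b w)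
    rcases eq_or_ne T w with rfl | hTw
    · rcases eq_or_ne S T with rfl | hS
      · rw [gaussSolve_cons_self, ← mul_assoc]
        exact mul_le_mul_left mul_kstar_le_kstar _
      · rw [gaussSolve_cons_self, gaussSolve_cons_of_ne _ _ _ hS, ← mul_assoc, mul_add,
          ← List.sum_map_mul_left]
        refine add_le ((le_add_self : _ ≤ elimVector m b T S).trans
          (le_gaussSolve ws _ (elimVector m b T) S)) ?_
        refine List.sum_le_of_forall_le' fun y hy => ?_
        obtain ⟨T', hT', rfl⟩ := List.mem_map.1 hy
        calc m S T * (m T T)∗ * (m T T' * x T') ≤ elimMatrix m T S T' * x T' := by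
              rw [← mul_assoc]; exact mul_le_mul_left le_add_self _
          _ ≤ x S := ih (elimMatrix m T) (elimVector m b T) S hT'
    · have hT' : T ∈ ws := (List.mem_cons.1 hT).resolve_left hTw
      rw [gaussSolve_cons_of_ne _ _ _ hTw]
      rcases eq_or_ne S w with rfl | hS
      · rw [gaussSolve_cons_self]
        exact (List.le_sum_of_mem (List.mem_map_of_mem (f := fun T => m S T * x T) hT')).trans
          (le_add_self.trans (le_mul_of_one_le_left' one_le_kstar))
      · rw [gaussSolve_cons_of_ne _ _ _ hS]
        exact (mul_le_mul_left (le_self_add : m S T ≤ elimMatrix m w S T) _).trans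
          (ih (elimMatrix m w) (elimVector m b w) S hT')

lemma gaussSolve_mul_le (l : List ι) (m : ι → ι → K) (b y : ι → K) (c : K)
    (hm : ∀ S, ∀ T ∈ l, m S T * y T ≤ y S) (hb : ∀ S, b S * c ≤ y S) (S : ι) :
    gaussSolve l m b S * c ≤ y S := by
  induction l generalizing m b S with
  | nil => exact hb S
  | cons w ws ih =>
    have hpivot : ∀ S z, z ≤ y w → m S w * ((m w w)∗ * z) ≤ y S := fun S z hz =>
      (mul_le_mul_right (kstar_mul_le hz (hm w w List.mem_cons_self)) _).trans
        (hm S w List.mem_cons_self)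
    have hx := ih (elimMatrix m w) (elimVector m b w)
      (fun S T hT => by
        simp only [elimMatrix, add_mul, mul_assoc]
        exact add_le (hm S T (List.mem_cons_of_mem w hT))
          (hpivot S _ (hm w T (List.mem_cons_of_mem w hT))))
      (fun S => by
        simp only [elimVector, add_mul, mul_assoc]
        exact add_le (hb S) (hpivot S _ (hb w)))
    rcases eq_or_ne S w with rfl | hS
    · rw [gaussSolve_cons_self, mul_assoc, add_mul, ← List.sum_map_mul_right]
      refine kstar_mul_le (add_le (hb S) (List.sum_le_of_forall_le' fun z hz => ?_))
        (hm S S List.mem_cons_self)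
      obtain ⟨T, hT, rfl⟩ := List.mem_map.1 hz
      rw [mul_assoc]
      exact (mul_le_mul_right (hx T) _).trans (hm S T (List.mem_cons_of_mem S hT))
    · rw [gaussSolve_cons_of_ne _ _ _ hS]
      exact hx S

end GaussianElimination

section Letters

variable {α : Type*}

def letters : RegularExpression α → List α
  | .zero | .epsilon => []
  | .char a => [a]
  | .plus e f | .comp e f => letters e ++ letters f
  | .star e => letters e

lemma interp_le_one_of_letters {K : Type*} [KleeneAlgebra K] {h : α → K} {e : RegularExpression α}
    (he : ∀ a ∈ letters e, h a ≤ 1) : interp h e ≤ 1 := by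
  induction e with
  | zero => exact zero_le
  | epsilon => exact le_rfl
  | char a => exact he a (List.mem_singleton_self a)
  | plus e f ihe ihf =>
    exact add_le (ihe fun a ha => he a (List.mem_append_left _ ha))
      (ihf fun a ha => he a (List.mem_append_right (letters e) ha))
  | comp e f ihe ihf =>
    exact mul_le_one' (ihe fun a ha => he a (List.mem_append_left _ ha))
      (ihf fun a ha => he a (List.mem_append_right (letters e) ha))
  | star e ihe => exact (kstar_eq_one.2 (ihe he)).le

end Letters

lemma relComp_assoc {Q : Type*} (X Y Z : Q → Q → Prop) :
    relComp (relComp X Y) Z = relComp X (relComp Y Z) :=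
  Relation.comp_assoc

lemma relComp_eq {Q : Type*} (X : Q → Q → Prop) : relComp X Eq = X :=
  Relation.comp_eq

section TransformationAutomaton

open Relation

variable {α Q : Type*} {A : NFA α Q} {R : Q → Q → Prop} {s : (Q → Q → Prop) → RegularExpression α}

def transStep (A : NFA α Q) (S T : Q → Q → Prop) : Prop :=
  ∃ a, relComp S (deltaRel A a) = T

lemma RelSolution.one_le_interp (hs : RelSolution.{u} A R s) {K : Type u} [KleeneAlgebra K]
    {h : α → K} (hh : ∀ a, 1 ≤ h a) {S : Q → Q → Prop} (hS : ReflTransGen (transStep A) S R) :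
    1 ≤ interp h (s S) := by
  induction hS using ReflTransGen.head_induction_on with
  | refl => exact hs.1 K h
  | head hstep _ ih =>
    obtain ⟨a, rfl⟩ := hstep
    calc (1 : K) = 1 * 1 := (mul_one 1).symm
      _ ≤ h a * interp h (s _) := mul_le_mul' (hh a) ih
      _ ≤ _ := hs.2 _ a K h

/-- In `Language PUnit`, send `a` to `1 + {[()]}` and every other letter to `1`: without `a`,
`s S` would be at most `1`, yet it contains `[()]`. -/
lemma RelSolution.mem_letters (hs : RelSolution.{u} A R s) {S : Q → Q → Prop} {a : α}
    (hlive : ReflTransGen (transStep A) (relComp S (deltaRel A a)) R) : a ∈ letters (s S) := by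
  classical
  by_contra ha
  let x : Language PUnit.{u + 1} := 1 + {[PUnit.unit]}
  let h : α → Language PUnit.{u + 1} := fun b => if b = a then x else 1
  have hh : ∀ b, 1 ≤ h b := fun b => by
    by_cases hb : b = a
    · simp only [h, hb, if_true, x, le_self_add]
    · simp only [h, hb, if_false, le_rfl]
  have hx : x ≤ 1 :=
    calc x = h a * 1 := by simp [h]
      _ ≤ h a * interp h (s (relComp S (deltaRel A a))) :=
        mul_le_mul_right (hs.one_le_interp hh hlive) _
      _ ≤ interp h (s S) := hs.2 S a _ h
      _ ≤ 1 := interp_le_one_of_letters fun b hb => by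
        simp [h, show b ≠ a from fun hba => ha (hba ▸ hb)]
  exact List.cons_ne_nil _ _ (Language.mem_one _ |>.1 (hx (Or.inr rfl)))

open Classical in
noncomputable def transMatrix (A : NFA α Q) (F : List α) (S T : Q → Q → Prop) :
    RegularExpression α :=
  ((F.filter fun a => relComp S (deltaRel A a) = T).map char).sum

open Classical in
noncomputable def acceptVector (R S : Q → Q → Prop) : RegularExpression α :=
  if S = R then 1 else 0

open Classical in
/-- The least solution of `A[R]` with transitions restricted to the letters `F`, cut down to `0`
on the states from which `R` is unreachable; the cut makes it a solution for all letters. -/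
noncomputable def trimmedSolution (A : NFA α Q) (R : Q → Q → Prop) (states : List (Q → Q → Prop))
    (F : List α) (S : Q → Q → Prop) : RegularExpression α :=
  if ReflTransGen (transStep A) S R then gaussSolve states (transMatrix A F) (acceptVector R) S
  else 0

section Interpretation

variable {K : Type*} [KleeneAlgebra K] (h : α → K)

lemma le_interp_transMatrix {F : List α} {a : α} (ha : a ∈ F) (S : Q → Q → Prop) :
    h a ≤ interp h (transMatrix A F S (relComp S (deltaRel A a))) := by
  classical
  rw [transMatrix, interp_list_sum, List.map_map]
  exact List.le_sum_of_mem (List.mem_map_of_mem (List.mem_filter.2 ⟨ha, by simp⟩))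

lemma interp_transMatrix_mul_le (y : (Q → Q → Prop) → K)
    (hy : ∀ S a, h a * y (relComp S (deltaRel A a)) ≤ y S) (F : List α) (S T : Q → Q → Prop) :
    interp h (transMatrix A F S T) * y T ≤ y S := by
  classical
  rw [transMatrix, interp_list_sum, ← List.sum_map_mul_right]
  refine List.sum_le_of_forall_le' fun z hz => ?_
  obtain ⟨a, ha, rfl⟩ := List.mem_map.1 (List.map_map ▸ hz)
  obtain rfl := of_decide_eq_true (List.mem_filter.1 ha).2
  exact hy S a

lemma interp_trimmedSolution_mul_le (y : (Q → Q → Prop) → K)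
    (hy : ∀ S a, h a * y (relComp S (deltaRel A a)) ≤ y S) (states : List (Q → Q → Prop))
    (F : List α) (S : Q → Q → Prop) :
    interp h (trimmedSolution A R states F S) * y R ≤ y S := by
  classical
  unfold trimmedSolution
  split_ifs
  · rw [interp_gaussSolve]
    refine gaussSolve_mul_le _ _ _ y (y R)
      (fun S T _ => interp_transMatrix_mul_le h y hy F S T) (fun T => ?_) S
    unfold acceptVector
    split_ifs with hT
    · simp [hT]
    · simp
  · simp

end Interpretation

lemma RelSolution.relSolution_trimmedSolution (hs : RelSolution.{u} A R s)
    {states : List (Q → Q → Prop)} (hstates : ∀ S, S ∈ states) {F : List α} (hF : ∀ S, ∀ a ∈ letters (s S), a ∈ F) :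
    RelSolution.{u} A R (trimmedSolution A R states F) := by
  classical
  constructor
  · intro K _ h
    simp only [trimmedSolution, if_pos ReflTransGen.refl, interp_gaussSolve]
    exact le_gaussSolve states _ _ R |>.trans' (by simp [acceptVector])
  · intro S a K _ h
    by_cases hlive : ReflTransGen (transStep A) (relComp S (deltaRel A a)) R
    · have hS : ReflTransGen (transStep A) S R := hlive.head ⟨a, rfl⟩
      simp only [trimmedSolution, if_pos hlive, if_pos hS, interp_mul, interp_char,
        interp_gaussSolve]
      exact (mul_le_mul_left (le_interp_transMatrix h (hF S a (hs.mem_letters hlive)) S) _).trans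
        (mul_gaussSolve_le states (fun S T => interp h (transMatrix A F S T)) _ S (hstates _))
    · simp [trimmedSolution, hlive]

end TransformationAutomaton

section Composition

variable {α Q : Type*} {A : NFA α Q} {R : Q → Q → Prop}
  {s t : (Q → Q → Prop) → RegularExpression α}

lemma RelSolution.comp_left {P : Q → Q → Prop} (ht : RelSolution.{u} A (relComp P R) t) :
    RelSolution.{u} A R (fun T => t (relComp P T)) :=
  ⟨ht.1, fun T a => by simpa only [relComp_assoc] using ht.2 (relComp P T) a⟩

lemma LeastRelSolution.kle_of_comp_left {P : Q → Q → Prop} (hs : LeastRelSolution.{u} A R s)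
    (ht : RelSolution.{u} A (relComp P R) t) : kle.{u} (s Eq) (t P) := by
  simpa only [relComp_eq] using hs.2 _ ht.comp_left Eq

lemma LeastRelSolution.mul_kle_of_transitions [Finite Q] (hs : LeastRelSolution.{u} A R s)
    (ht : ∀ S a, kle.{u} (char a * t (relComp S (deltaRel A a))) (t S)) (S : Q → Q → Prop) :
    kle.{u} (s S * t R) (t S) := by
  obtain ⟨states, -, hstates⟩ := Finite.exists_univ_list (Q → Q → Prop)
  let F := states.flatMap fun S => letters (s S)
  have hF : ∀ S, ∀ a ∈ letters (s S), a ∈ F := fun S _ ha =>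
    List.mem_flatMap.2 ⟨S, hstates S, ha⟩
  have hu := hs.2 _ (hs.1.relSolution_trimmedSolution hstates hF) S
  intro K _ h
  calc interp h (s S * t R)
      ≤ interp h (trimmedSolution A R states F S) * interp h (t R) := mul_le_mul_left (hu K h) _
    _ ≤ interp h (t S) :=
      interp_trimmedSolution_mul_le h (fun T => interp h (t T)) (fun T a => ht T a K h) states F S

end Composition

/-- Composing solutions of transformation automata:
`sol_{A[R₁]}(id) * sol_{A[R₂]}(id) ⊴ sol_{A[R₁ ∘ R₂]}(id)`. -/
theorem transformation_solution_compose {α : Type*} {Q : Type*} [Finite Q]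
    (A : NFA α Q) (R₁ R₂ : Q → Q → Prop)
    (s₁ s₂ s₃ : (Q → Q → Prop) → RegularExpression α)
    (hs₁ : LeastRelSolution.{u} A R₁ s₁) (hs₂ : LeastRelSolution.{u} A R₂ s₂)
    (hs₃ : LeastRelSolution.{u} A (relComp R₁ R₂) s₃) :
    kle.{u} (s₁ Eq * s₂ Eq) (s₃ Eq) := by
  have h₂ : kle.{u} (s₂ Eq) (s₃ R₁) := hs₂.kle_of_comp_left hs₃.1
  have h₁ : kle.{u} (s₁ Eq * s₃ R₁) (s₃ Eq) := hs₁.mul_kle_of_transitions hs₃.1.2 Eq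
  intro K _ h
  exact (mul_le_mul_right (h₂ K h) _).trans (h₁ K h)
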